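/- arXiv:1902.08567 — 3 statements merged into one kernel-verified Lean document; each statement's English description precedes it below -/
import Mathlib

section
/- Let d ≥ 1, let M be a real symmetric positive definite d×d matrix, let β > 0, and let f : ℝᵈ × ℝ → ℝᵈ be continuous and continuously differentiable in its first argument, with spatial Jacobian Df(x,t). Assume the (constant-metric) contraction condition: for all x ∈ ℝᵈ and t ≥ 0, Df(x,t)ᵀ M + M Df(x,t) ⪯ −2β M in the sense of quadratic forms. Then for any two solutions x, y : [0,∞) → ℝᵈ of the ODE ż(t) = f(z(t), t), and all t ≥ 0, ⟨x(t) − y(t), M (x(t) − y(t))⟩ ≤ e^{−2βt} ⟨x(0) − y(0), M (x(0) − y(0))⟩. -/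
/-!
The derivative of `V t = ⟪x t - y t, M (x t - y t)⟫` is the symmetrised `M`-form of
`x t - y t` against `f (x t) t - f (y t) t`. Applying the mean value theorem along the segment
from `y t` to `x t` transfers the Jacobian bound to this increment, so `V' ≤ -2β V`, and
Grönwall's inequality gives `V t ≤ exp (-2β t) V 0`.
-/

open RealInnerProductSpace

open Real in
theorem le_exp_mul_of_hasDerivAt_le_mul {V V' : ℝ → ℝ} {K : ℝ}
    (hV : ∀ t, 0 ≤ t → HasDerivAt V (V' t) t) (hbound : ∀ t, 0 ≤ t → V' t ≤ K * V t)
    (t : ℝ) (ht : 0 ≤ t) : V t ≤ exp (K * t) * V 0 := by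
  have key := le_gronwallBound_of_liminf_deriv_right_le (f := V) (f' := V') (δ := V 0) (K := K)
    (ε := 0) (a := 0) (b := t)
    (fun s hs => (hV s hs.1).continuousAt.continuousWithinAt)
    (fun s hs _ hr => (hV s hs.1).hasDerivWithinAt.liminf_right_slope_le hr) le_rfl
    (fun s hs => by simpa using hbound s hs.1) t ⟨ht, le_rfl⟩
  simpa [gronwallBound_ε0, mul_comm] using key

section OneSidedLipschitz

variable {E : Type*} [NormedAddCommGroup E] [InnerProductSpace ℝ E]

theorem inner_sub_add_inner_sub_le_of_hasFDerivAt {g : E → E} {Dg : E → E →L[ℝ] E}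
    (M : E →L[ℝ] E) {c : ℝ} (hg : ∀ z, HasFDerivAt g (Dg z) z)
    (hDg : ∀ z v, ⟪Dg z v, M v⟫ + ⟪v, M (Dg z v)⟫ ≤ c * ⟪v, M v⟫) (a b : E) :
    ⟪g a - g b, M (a - b)⟫ + ⟪a - b, M (g a - g b)⟫ ≤ c * ⟪a - b, M (a - b)⟫ := by
  set v := a - b
  let φ : ℝ → ℝ := fun s => ⟪g (b + s • v), M v⟫ + ⟪v, M (g (b + s • v))⟫
  have hφ : ∀ s,
      HasDerivAt φ (⟪Dg (b + s • v) v, M v⟫ + ⟪v, M (Dg (b + s • v) v)⟫) s := by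
    intro s
    have hpath : HasDerivAt (fun s : ℝ => b + s • v) v s := by
      simpa using ((hasDerivAt_id s).smul_const v).const_add b
    have hG := (hg (b + s • v)).comp_hasDerivAt s hpath
    refine ((hG.inner ℝ (hasDerivAt_const s (M v))).add
      ((hasDerivAt_const s v).inner ℝ (M.hasFDerivAt.comp_hasDerivAt s hG))).congr_deriv ?_
    simp
  have hmvt := image_sub_le_mul_sub_of_deriv_le (fun s => (hφ s).differentiableAt)
    (fun s => (hφ s).deriv ▸ hDg (b + s • v) v) zero_le_one
  have hab : b + v = a := add_sub_cancel b a
  simp only [φ, zero_smul, add_zero, one_smul, hab, mul_one, sub_zero] at hmvt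
  simp only [inner_sub_left, inner_sub_right, map_sub]
  linarith

end OneSidedLipschitz

theorem deterministic_contraction_constant_metric_general
    {d : ℕ}
    (M : EuclideanSpace ℝ (Fin d) →L[ℝ] EuclideanSpace ℝ (Fin d))
    (β : ℝ)
    (f : EuclideanSpace ℝ (Fin d) → ℝ → EuclideanSpace ℝ (Fin d))
    (Df : EuclideanSpace ℝ (Fin d) → ℝ →
      (EuclideanSpace ℝ (Fin d) →L[ℝ] EuclideanSpace ℝ (Fin d)))
    (hf_deriv : ∀ (t : ℝ) (x : EuclideanSpace ℝ (Fin d)),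
      HasFDerivAt (fun z => f z t) (Df x t) x)
    (hcontr : ∀ (x : EuclideanSpace ℝ (Fin d)) (t : ℝ), 0 ≤ t →
      ∀ v : EuclideanSpace ℝ (Fin d),
        ⟪Df x t v, M v⟫ + ⟪v, M (Df x t v)⟫ ≤ -2 * β * ⟪v, M v⟫)
    (x y : ℝ → EuclideanSpace ℝ (Fin d))
    (hx : ∀ t : ℝ, 0 ≤ t → HasDerivAt x (f (x t) t) t)
    (hy : ∀ t : ℝ, 0 ≤ t → HasDerivAt y (f (y t) t) t) :
    ∀ t : ℝ, 0 ≤ t →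
      ⟪x t - y t, M (x t - y t)⟫ ≤
        Real.exp (-2 * β * t) * ⟪x 0 - y 0, M (x 0 - y 0)⟫ := by
  have hV : ∀ t, 0 ≤ t → HasDerivAt (fun t => ⟪x t - y t, M (x t - y t)⟫)
      (⟪f (x t) t - f (y t) t, M (x t - y t)⟫ + ⟪x t - y t, M (f (x t) t - f (y t) t)⟫) t :=
    fun t ht =>
      have he := (hx t ht).sub (hy t ht)
      (he.inner ℝ (M.hasFDerivAt.comp_hasDerivAt t he)).congr_deriv (add_comm _ _)
  exact le_exp_mul_of_hasDerivAt_le_mul hV fun t ht =>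
    inner_sub_add_inner_sub_le_of_hasFDerivAt M (hf_deriv t) (fun z => hcontr z t ht) (x t) (y t)

/-- Deterministic contraction (Theorem 1 of the paper) in a constant metric `M`:
if `Df(x,t)ᵀ M + M Df(x,t) ⪯ -2β M` for all `x` and `t ≥ 0`, then for any two solutions
`x, y` of `ż = f(z,t)`, the squared `M`-distance decays as `e^{-2βt}`. -/
theorem deterministic_contraction_constant_metric
    {d : ℕ} (hd : 1 ≤ d)
    (M : EuclideanSpace ℝ (Fin d) →L[ℝ] EuclideanSpace ℝ (Fin d))
    (hMsymm : ∀ v w : EuclideanSpace ℝ (Fin d), ⟪M v, w⟫ = ⟪v, M w⟫)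
    (hMpos : ∀ v : EuclideanSpace ℝ (Fin d), v ≠ 0 → 0 < ⟪v, M v⟫)
    (β : ℝ) (hβ : 0 < β)
    (f : EuclideanSpace ℝ (Fin d) → ℝ → EuclideanSpace ℝ (Fin d))
    (Df : EuclideanSpace ℝ (Fin d) → ℝ →
      (EuclideanSpace ℝ (Fin d) →L[ℝ] EuclideanSpace ℝ (Fin d)))
    (hf_cont : Continuous fun p : EuclideanSpace ℝ (Fin d) × ℝ => f p.1 p.2)
    (hf_deriv : ∀ (t : ℝ) (x : EuclideanSpace ℝ (Fin d)),
      HasFDerivAt (fun z => f z t) (Df x t) x)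
    (hDf_cont : ∀ t : ℝ, Continuous fun x => Df x t)
    (hcontr : ∀ (x : EuclideanSpace ℝ (Fin d)) (t : ℝ), 0 ≤ t →
      ∀ v : EuclideanSpace ℝ (Fin d),
        ⟪Df x t v, M v⟫ + ⟪v, M (Df x t v)⟫ ≤ -2 * β * ⟪v, M v⟫)
    (x y : ℝ → EuclideanSpace ℝ (Fin d))
    (hx : ∀ t : ℝ, 0 ≤ t → HasDerivAt x (f (x t) t) t)
    (hy : ∀ t : ℝ, 0 ≤ t → HasDerivAt y (f (y t) t) t) :
    ∀ t : ℝ, 0 ≤ t →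
      ⟪x t - y t, M (x t - y t)⟫ ≤
        Real.exp (-2 * β * t) * ⟪x 0 - y 0, M (x 0 - y 0)⟫ :=
  deterministic_contraction_constant_metric_general M β f Df hf_deriv hcontr x y hx hy
end

section
/- Let d ≥ 1, let M be a real symmetric positive definite d×d matrix, let β > 0, and let f : ℝᵈ → ℝᵈ be continuously differentiable with Jacobian Df. If Df(x)ᵀ M + M Df(x) ⪯ −2β M for all x ∈ ℝᵈ, then f satisfies the incremental (one-sided Lipschitz) estimate ⟨f(x) − f(y), M(x − y)⟩ ≤ −β ⟨x − y, M(x − y)⟩ for all x, y ∈ ℝᵈ. -/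
open RealInnerProductSpace

/-! The contraction condition only enters through the quadratic form `v ↦ ⟪Df(z) v, M v⟫`,
which by symmetry of `M` is half the form of `Df(z)ᵀ M + M Df(z)`, hence at most `-β ⟪v, M v⟫`.
Applying the mean value theorem to `t ↦ ⟪f (y + t (x - y)), M (x - y)⟫` produces a point `z` on
the segment with `⟪f x - f y, M (x - y)⟫ = ⟪Df(z) (x - y), M (x - y)⟫`. -/

section MeanValue

variable {E F : Type*} [NormedAddCommGroup E] [NormedSpace ℝ E]
  [NormedAddCommGroup F] [InnerProductSpace ℝ F]

theorem exists_inner_sub_eq_inner_fderiv {f : E → F} (hf : Differentiable ℝ f) (w : F)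
    (x y : E) : ∃ z ∈ segment ℝ y x, ⟪f x - f y, w⟫ = ⟪fderiv ℝ f z (x - y), w⟫ := by
  have hg : ∀ z ∈ Set.univ, HasFDerivWithinAt (innerSL ℝ w ∘ f)
      ((innerSL ℝ w).comp (fderiv ℝ f z)) Set.univ z := fun z _ ↦
    ((innerSL ℝ w).hasFDerivAt.comp z (hf z).hasFDerivAt).hasFDerivWithinAt
  obtain ⟨z, hz, hmvt⟩ := domain_mvt hg convex_univ (Set.mem_univ y) (Set.mem_univ x)
  refine ⟨z, hz, ?_⟩
  simp only [Function.comp_apply, ContinuousLinearMap.comp_apply, innerSL_apply_apply] at hmvt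
  rw [real_inner_comm, inner_sub_right, hmvt, real_inner_comm]

end MeanValue

theorem inner_apply_le_of_add_inner_symm_le {E : Type*} [NormedAddCommGroup E]
    [InnerProductSpace ℝ E] {M : E →L[ℝ] E} (hM : ∀ v w, ⟪M v, w⟫ = ⟪v, M w⟫) {u v : E} {c : ℝ}
    (h : ⟪u, M v⟫ + ⟪v, M u⟫ ≤ 2 * c) : ⟪u, M v⟫ ≤ c := by
  have hswap : ⟪v, M u⟫ = ⟪u, M v⟫ := by rw [← hM, real_inner_comm]
  linarith

theorem jacobian_contraction_implies_incremental_general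
    {d : ℕ}
    (M : EuclideanSpace ℝ (Fin d) →L[ℝ] EuclideanSpace ℝ (Fin d))
    (hMsymm : ∀ v w : EuclideanSpace ℝ (Fin d), ⟪M v, w⟫ = ⟪v, M w⟫)
    (β : ℝ)
    (f : EuclideanSpace ℝ (Fin d) → EuclideanSpace ℝ (Fin d))
    (hf : ContDiff ℝ 1 f)
    (hcontr : ∀ x v : EuclideanSpace ℝ (Fin d),
      ⟪fderiv ℝ f x v, M v⟫ + ⟪v, M (fderiv ℝ f x v)⟫ ≤ -2 * β * ⟪v, M v⟫) :
    ∀ x y : EuclideanSpace ℝ (Fin d),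
      ⟪f x - f y, M (x - y)⟫ ≤ -β * ⟪x - y, M (x - y)⟫ := by
  intro x y
  obtain ⟨z, -, hmvt⟩ :=
    exists_inner_sub_eq_inner_fderiv (hf.differentiable one_ne_zero) (M (x - y)) x y
  rw [hmvt]
  exact inner_apply_le_of_add_inner_symm_le hMsymm (by linarith [hcontr z (x - y)])

/-- If the Jacobian of a `C¹` vector field `f` satisfies `Df(x)ᵀ M + M Df(x) ⪯ -2β M` in a
symmetric positive definite metric `M`, then `f` satisfies the incremental (one-sided Lipschitz)
estimate `⟨f(x) - f(y), M(x - y)⟩ ≤ -β ⟨x - y, M(x - y)⟩`. -/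
theorem jacobian_contraction_implies_incremental
    {d : ℕ} (hd : 1 ≤ d)
    (M : EuclideanSpace ℝ (Fin d) →L[ℝ] EuclideanSpace ℝ (Fin d))
    (hMsymm : ∀ v w : EuclideanSpace ℝ (Fin d), ⟪M v, w⟫ = ⟪v, M w⟫)
    (hMpos : ∀ v : EuclideanSpace ℝ (Fin d), v ≠ 0 → 0 < ⟪v, M v⟫)
    (β : ℝ) (hβ : 0 < β)
    (f : EuclideanSpace ℝ (Fin d) → EuclideanSpace ℝ (Fin d))
    (hf : ContDiff ℝ 1 f)
    (hcontr : ∀ x v : EuclideanSpace ℝ (Fin d),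
      ⟪fderiv ℝ f x v, M v⟫ + ⟪v, M (fderiv ℝ f x v)⟫ ≤ -2 * β * ⟪v, M v⟫) :
    ∀ x y : EuclideanSpace ℝ (Fin d),
      ⟪f x - f y, M (x - y)⟫ ≤ -β * ⟪x - y, M (x - y)⟫ :=
  jacobian_contraction_implies_incremental_general M hMsymm β f hf hcontr
end

section
/- Under the hypotheses of the previous statement (a Markov kernel P from ℝᵈ × ℝᵈ to ℝᵈ × ℝᵈ with ∫ ‖x − y‖² P(z₀, d(x,y)) ≤ α^{−1}(e^{−2βt}‖x₀ − y₀‖² + C/β) for all z₀ = (x₀,y₀), where α, β > 0 and C ≥ 0), and assuming in addition that the marginals μ_t and ν_t of π_t = ∫ P(z₀, ·) dπ₀(z₀) do not depend on the choice of coupling π₀ of μ₀ and ν₀, the time-t laws satisfy the Wasserstein contraction inequality W₂(μ_t, ν_t) ≤ α^{−1/2}(e^{−βt} W₂(μ₀, ν₀) + √(C/β)). -/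
/-
Pushing a coupling `π₀` of `μ₀, ν₀` through `P` gives a coupling of `μ_t, ν_t`; integrating the
kernel estimate against `π₀` bounds its cost by `α⁻¹ (e^{-2βt} cost(π₀) + C/β)`. Since
`I ↦ c I + D` is monotone and continuous on `ℝ≥0∞`, taking the infimum over `π₀` gives
`W₂(μ_t, ν_t)² ≤ α⁻¹ (e^{-2βt} W₂(μ₀, ν₀)² + C/β)` in `ℝ≥0∞`. The finite second moments make
`W₂(μ₀, ν₀)²` finite (otherwise `toReal` would read it as `0`), so the bound passes to `ℝ`, and
`√(a + b) ≤ √a + √b` finishes.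
-/

open MeasureTheory ProbabilityTheory Filter Topology
open scoped ENNReal NNReal

/-- The 2-Wasserstein distance between two measures on a normed space: the infimum over all
couplings `π` (joint measures with the given marginals) of `(∫ ‖x - y‖² dπ)^{1/2}`. -/
noncomputable def W2 {E : Type*} [NormedAddCommGroup E] [MeasurableSpace E]
    (μ ν : Measure E) : ℝ :=
  Real.sqrt (sInf {I : ℝ≥0∞ | ∃ π : Measure (E × E), IsProbabilityMeasure π ∧
    π.map Prod.fst = μ ∧ π.map Prod.snd = ν ∧
    I = ∫⁻ p, (‖p.1 - p.2‖₊ : ℝ≥0∞) ^ 2 ∂π}).toReal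

theorem sq_nnnorm_sub_le {E : Type*} [SeminormedAddCommGroup E] (x y : E) :
    ‖x - y‖₊ ^ 2 ≤ 2 * (‖x‖₊ ^ 2 + ‖y‖₊ ^ 2) :=
  (pow_le_pow_left₀ zero_le (nnnorm_sub_le x y) 2).trans add_sq_le

theorem Real.sqrt_add_le_add_sqrt {x : ℝ} (hx : 0 ≤ x) (y : ℝ) : √(x + y) ≤ √x + √y := by
  rcases le_total y 0 with hy | hy
  · rw [Real.sqrt_eq_zero'.2 hy, add_zero]
    exact Real.sqrt_le_sqrt (by linarith)
  · rw [Real.sqrt_le_left (by positivity), add_sq, Real.sq_sqrt hx, Real.sq_sqrt hy]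
    nlinarith [Real.sqrt_nonneg x, Real.sqrt_nonneg y]

theorem ENNReal.le_mul_sInf_add {s : Set ℝ≥0∞} {x c D : ℝ≥0∞} (hs : s.Nonempty) (hc : c ≠ ⊤)
    (h : ∀ I ∈ s, x ≤ c * I + D) : x ≤ c * sInf s + D := by
  have hmono : Monotone fun I => c * I + D := fun _ _ hIJ => by dsimp only; gcongr
  have hcont : Continuous fun I => c * I + D :=
    (ENNReal.continuous_const_mul hc).add continuous_const
  rw [hmono.map_csInf_of_continuousAt hcont.continuousAt hs (OrderBot.bddBelow s)]
  exact le_sInf (by rintro _ ⟨I, hI, rfl⟩; exact h I hI)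

theorem MeasureTheory.Measure.lintegral_bind_le_mul_add {α β : Type*} [MeasurableSpace α]
    [MeasurableSpace β] {π : Measure α} [IsProbabilityMeasure π] {P : α → Measure β}
    {f : β → ℝ≥0∞} {g : α → ℝ≥0∞} (hg : Measurable g) {c D : ℝ≥0∞}
    (hP : ∀ a, ∫⁻ y, f y ∂(P a) ≤ c * g a + D) :
    ∫⁻ y, f y ∂(π.bind P) ≤ c * ∫⁻ a, g a ∂π + D :=
  calc ∫⁻ y, f y ∂(π.bind P) ≤ ∫⁻ a, ∫⁻ y, f y ∂(P a) ∂π := lintegral_bind_le _ _ _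
    _ ≤ ∫⁻ a, c * g a + D ∂π := lintegral_mono hP
    _ = c * ∫⁻ a, g a ∂π + D := by
      rw [lintegral_add_right _ measurable_const, lintegral_const_mul _ hg, lintegral_const,
        measure_univ, mul_one]

theorem ENNReal.ofReal_mul_mul_add_le {k a x : ℝ} (hk : 0 ≤ k) (ha : 0 ≤ a) (b : ℝ) :
    ENNReal.ofReal (k * (a * x + b)) ≤
      ENNReal.ofReal k * (ENNReal.ofReal a * ENNReal.ofReal x + ENNReal.ofReal b) := by
  rw [ENNReal.ofReal_mul hk, ← ENNReal.ofReal_mul ha]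
  gcongr
  exact ENNReal.ofReal_add_le

theorem ENNReal.sqrt_toReal_le_of_le_ofReal {x W : ℝ≥0∞} {k a : ℝ} (hk : 0 ≤ k) (ha : 0 ≤ a)
    (hW : W ≠ ⊤) (b : ℝ)
    (h : x ≤ ENNReal.ofReal k * (ENNReal.ofReal (a ^ 2) * W + ENNReal.ofReal b)) :
    √x.toReal ≤ √k * (a * √W.toReal + √b) := by
  have hx : x.toReal ≤ k * (a ^ 2 * W.toReal + max b 0) := by
    have := ENNReal.toReal_mono (by finiteness) h
    rwa [ENNReal.toReal_mul, ENNReal.toReal_add (by finiteness) (by finiteness),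
      ENNReal.toReal_mul, ENNReal.toReal_ofReal hk, ENNReal.toReal_ofReal (by positivity),
      ENNReal.toReal_ofReal'] at this
  have hsqrt_max : √(max b 0) = √b := by
    rcases le_total b 0 with hb | hb
    · rw [max_eq_right hb, Real.sqrt_zero, Real.sqrt_eq_zero'.2 hb]
    · rw [max_eq_left hb]
  calc √x.toReal ≤ √(k * (a ^ 2 * W.toReal + max b 0)) := Real.sqrt_le_sqrt hx
    _ = √k * √(a ^ 2 * W.toReal + max b 0) := Real.sqrt_mul hk _
    _ ≤ √k * (√(a ^ 2 * W.toReal) + √(max b 0)) := by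
      gcongr; exact Real.sqrt_add_le_add_sqrt (by positivity) _
    _ = √k * (a * √W.toReal + √b) := by
      rw [Real.sqrt_mul (sq_nonneg a), Real.sqrt_sq ha, hsqrt_max]

variable {E : Type*} [NormedAddCommGroup E] [MeasurableSpace E]

noncomputable def sqDistCost (π : Measure (E × E)) : ℝ≥0∞ :=
  ∫⁻ p, (‖p.1 - p.2‖₊ : ℝ≥0∞) ^ 2 ∂π

noncomputable def W2sq (μ ν : Measure E) : ℝ≥0∞ :=
  sInf {I : ℝ≥0∞ | ∃ π : Measure (E × E), IsProbabilityMeasure π ∧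
    π.map Prod.fst = μ ∧ π.map Prod.snd = ν ∧ I = sqDistCost π}

theorem W2_eq_sqrt_toReal_W2sq (μ ν : Measure E) : W2 μ ν = √(W2sq μ ν).toReal := rfl

theorem W2sq_le_sqDistCost {μ ν : Measure E} {π : Measure (E × E)} [IsProbabilityMeasure π]
    (hfst : π.map Prod.fst = μ) (hsnd : π.map Prod.snd = ν) : W2sq μ ν ≤ sqDistCost π :=
  sInf_le ⟨π, inferInstance, hfst, hsnd, rfl⟩

variable [BorelSpace E]

theorem sqDistCost_le_of_marginals {μ ν : Measure E} {π : Measure (E × E)}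
    (hfst : π.map Prod.fst = μ) (hsnd : π.map Prod.snd = ν) :
    sqDistCost π ≤ 2 * (∫⁻ x, (‖x‖₊ : ℝ≥0∞) ^ 2 ∂μ + ∫⁻ y, (‖y‖₊ : ℝ≥0∞) ^ 2 ∂ν) := by
  rw [← hfst, ← hsnd, lintegral_map (by fun_prop) measurable_fst,
    lintegral_map (by fun_prop) measurable_snd, ← lintegral_add_left (by fun_prop),
    ← lintegral_const_mul _ (by fun_prop)]
  exact lintegral_mono fun p => by
    simpa using ENNReal.coe_le_coe.2 (sq_nnnorm_sub_le p.1 p.2)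

theorem W2sq_lt_top {μ ν : Measure E} [IsProbabilityMeasure μ] [IsProbabilityMeasure ν]
    (hμ : ∫⁻ x, (‖x‖₊ : ℝ≥0∞) ^ 2 ∂μ < ⊤) (hν : ∫⁻ y, (‖y‖₊ : ℝ≥0∞) ^ 2 ∂ν < ⊤) :
    W2sq μ ν < ⊤ := by
  have hfst : (μ.prod ν).map Prod.fst = μ := by simp
  have hsnd : (μ.prod ν).map Prod.snd = ν := by simp
  calc W2sq μ ν ≤ sqDistCost (μ.prod ν) := W2sq_le_sqDistCost hfst hsnd
    _ ≤ 2 * (∫⁻ x, (‖x‖₊ : ℝ≥0∞) ^ 2 ∂μ + ∫⁻ y, (‖y‖₊ : ℝ≥0∞) ^ 2 ∂ν) :=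
      sqDistCost_le_of_marginals hfst hsnd
    _ < ⊤ := ENNReal.mul_lt_top ENNReal.ofNat_lt_top (ENNReal.add_lt_top.2 ⟨hμ, hν⟩)

theorem W2sq_le_mul_add_of_kernel [SecondCountableTopology E] {μ₀ ν₀ μt νt : Measure E}
    [IsProbabilityMeasure μ₀] [IsProbabilityMeasure ν₀] (P : Kernel (E × E) (E × E))
    [IsMarkovKernel P] {c D : ℝ≥0∞} (hc : c ≠ ⊤)
    (hP : ∀ z : E × E, sqDistCost (P z) ≤ c * (‖z.1 - z.2‖₊ : ℝ≥0∞) ^ 2 + D)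
    (hmarg : ∀ π₀ : Measure (E × E), IsProbabilityMeasure π₀ → π₀.map Prod.fst = μ₀ →
      π₀.map Prod.snd = ν₀ → (π₀.bind P).map Prod.fst = μt ∧ (π₀.bind P).map Prod.snd = νt) :
    W2sq μt νt ≤ c * W2sq μ₀ ν₀ + D := by
  refine ENNReal.le_mul_sInf_add ⟨_, μ₀.prod ν₀, inferInstance, by simp, by simp, rfl⟩ hc ?_
  rintro _ ⟨π₀, hπ₀, hfst, hsnd, rfl⟩
  obtain ⟨hfst_t, hsnd_t⟩ := hmarg π₀ hπ₀ hfst hsnd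
  calc W2sq μt νt ≤ sqDistCost (P ∘ₘ π₀) := W2sq_le_sqDistCost hfst_t hsnd_t
    _ ≤ c * sqDistCost π₀ + D := Measure.lintegral_bind_le_mul_add (by fun_prop) hP

theorem stochastic_contraction_wasserstein_general
    {d : ℕ} (α β C t : ℝ) (hα : 0 < α)
    (P : Kernel (EuclideanSpace ℝ (Fin d) × EuclideanSpace ℝ (Fin d))
      (EuclideanSpace ℝ (Fin d) × EuclideanSpace ℝ (Fin d)))
    [IsMarkovKernel P]
    (hP : ∀ z₀ : EuclideanSpace ℝ (Fin d) × EuclideanSpace ℝ (Fin d),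
      (∫⁻ p, (‖p.1 - p.2‖₊ : ℝ≥0∞) ^ 2 ∂(P z₀)) ≤
        ENNReal.ofReal (α⁻¹ * (Real.exp (-2 * β * t) * ‖z₀.1 - z₀.2‖ ^ 2 + C / β)))
    (μ₀ ν₀ : Measure (EuclideanSpace ℝ (Fin d)))
    (hμ₀_prob : IsProbabilityMeasure μ₀) (hν₀_prob : IsProbabilityMeasure ν₀)
    (hμ₀_mom : (∫⁻ x, (‖x‖₊ : ℝ≥0∞) ^ 2 ∂μ₀) < ⊤)
    (hν₀_mom : (∫⁻ x, (‖x‖₊ : ℝ≥0∞) ^ 2 ∂ν₀) < ⊤)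
    (μt νt : Measure (EuclideanSpace ℝ (Fin d)))
    (hmarg : ∀ π₀ : Measure (EuclideanSpace ℝ (Fin d) × EuclideanSpace ℝ (Fin d)),
      IsProbabilityMeasure π₀ → π₀.map Prod.fst = μ₀ → π₀.map Prod.snd = ν₀ →
        (π₀.bind fun z => P z).map Prod.fst = μt ∧
          (π₀.bind fun z => P z).map Prod.snd = νt) :
    W2 μt νt ≤ (Real.sqrt α)⁻¹ * (Real.exp (-β * t) * W2 μ₀ ν₀ + Real.sqrt (C / β)) := by
  have hexp : Real.exp (-2 * β * t) = Real.exp (-β * t) ^ 2 := by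
    rw [← Real.exp_nat_mul]; ring_nf
  have hk : 0 ≤ α⁻¹ := inv_nonneg.2 hα.le
  have hP' (z) : sqDistCost (P z) ≤
      ENNReal.ofReal α⁻¹ * ENNReal.ofReal (Real.exp (-β * t) ^ 2) * (‖z.1 - z.2‖₊ : ℝ≥0∞) ^ 2 +
      ENNReal.ofReal α⁻¹ * ENNReal.ofReal (C / β) := by
    refine (hP z).trans ((ENNReal.ofReal_mul_mul_add_le hk (by positivity) _).trans_eq ?_)
    rw [hexp, ENNReal.ofReal_pow (norm_nonneg _), ofReal_norm, enorm_eq_nnnorm]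
    ring
  have key := W2sq_le_mul_add_of_kernel P (by finiteness) hP' hmarg
  rw [mul_assoc, ← mul_add] at key
  rw [W2_eq_sqrt_toReal_W2sq, W2_eq_sqrt_toReal_W2sq, ← Real.sqrt_inv]
  exact ENNReal.sqrt_toReal_le_of_le_ofReal hk (Real.exp_pos _).le
    (W2sq_lt_top hμ₀_mom hν₀_mom).ne _ key

/-- The conclusion of the paper's main theorem (Theorem 2, Stochastic Contraction in `W₂`): if a
Markov kernel `P` on `ℝᵈ × ℝᵈ` satisfies the conditional mean-square contraction estimate,
and the time-`t` marginal laws `μ_t, ν_t` of `π_t = ∫ P(z₀, ·) dπ₀(z₀)` do not depend on the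
choice of coupling `π₀` of `μ₀, ν₀`, then
`W₂(μ_t, ν_t) ≤ α^{-1/2} (e^{-βt} W₂(μ₀, ν₀) + √(C/β))`. -/
theorem stochastic_contraction_wasserstein
    {d : ℕ} (hd : 1 ≤ d) (α β C t : ℝ) (hα : 0 < α) (hβ : 0 < β) (hC : 0 ≤ C) (ht : 0 ≤ t)
    (P : Kernel (EuclideanSpace ℝ (Fin d) × EuclideanSpace ℝ (Fin d))
      (EuclideanSpace ℝ (Fin d) × EuclideanSpace ℝ (Fin d)))
    [IsMarkovKernel P]
    (hP : ∀ z₀ : EuclideanSpace ℝ (Fin d) × EuclideanSpace ℝ (Fin d),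
      (∫⁻ p, (‖p.1 - p.2‖₊ : ℝ≥0∞) ^ 2 ∂(P z₀)) ≤
        ENNReal.ofReal (α⁻¹ * (Real.exp (-2 * β * t) * ‖z₀.1 - z₀.2‖ ^ 2 + C / β)))
    (μ₀ ν₀ : Measure (EuclideanSpace ℝ (Fin d)))
    (hμ₀_prob : IsProbabilityMeasure μ₀) (hν₀_prob : IsProbabilityMeasure ν₀)
    (hμ₀_mom : (∫⁻ x, (‖x‖₊ : ℝ≥0∞) ^ 2 ∂μ₀) < ⊤)
    (hν₀_mom : (∫⁻ x, (‖x‖₊ : ℝ≥0∞) ^ 2 ∂ν₀) < ⊤)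
    (μt νt : Measure (EuclideanSpace ℝ (Fin d)))
    (hmarg : ∀ π₀ : Measure (EuclideanSpace ℝ (Fin d) × EuclideanSpace ℝ (Fin d)),
      IsProbabilityMeasure π₀ → π₀.map Prod.fst = μ₀ → π₀.map Prod.snd = ν₀ →
        (π₀.bind fun z => P z).map Prod.fst = μt ∧
          (π₀.bind fun z => P z).map Prod.snd = νt) :
    W2 μt νt ≤ (Real.sqrt α)⁻¹ * (Real.exp (-β * t) * W2 μ₀ ν₀ + Real.sqrt (C / β)) :=
  stochastic_contraction_wasserstein_general α β C t hα P hP μ₀ ν₀ hμ₀_prob hν₀_prob hμ₀_mom hν₀_mom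
    μt νt hmarg
end
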